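/- arXiv:1306.1679 — 8 statements merged into one kernel-verified Lean document; each statement's English description precedes it below -/
import Mathlib

section
/- Let f, g be quaternions with f² = g² = −1, and for x ∈ ℍ set x± = ½(x ± f x g), x₊f = ½(x − f x f), x₋f = ½(x + f x f), x₊g = ½(x − g x g), x₋g = ½(x + g x g). Then x± = x₊f · (1 ± fg)/2 + x₋f · (1 ∓ fg)/2 and x± = (1 ± fg)/2 · x₊g + (1 ∓ fg)/2 · x₋g. -/
open Quaternion

section Ring

variable {R : Type*} [Ring R]

theorem sub_mul_add_add_mul_of_mul_self_eq_neg_one {f : R} (hf : f * f = -1) (x g : R) :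
    (x - f * x * f) * (1 + f * g) + (x + f * x * f) * (1 - f * g) = 2 * (x + f * x * g) := by
  have hff : ∀ y : R, f * (f * y) = -y := fun y => by rw [← mul_assoc, hf, neg_one_mul]
  noncomm_ring
  simp only [hff, neg_smul, mul_neg]
  abel

theorem mul_sub_add_mul_add_of_mul_self_eq_neg_one {g : R} (hg : g * g = -1) (x f : R) :
    (1 + f * g) * (x - g * x * g) + (1 - f * g) * (x + g * x * g) = 2 * (x + f * x * g) := by
  have hgg : ∀ y : R, g * (g * y) = -y := fun y => by rw [← mul_assoc, hg, neg_one_mul]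
  noncomm_ring
  simp only [hgg, neg_smul, mul_neg]
  abel

end Ring

section DivisionRing

variable {R : Type*} [DivisionRing R]

theorem half_mul_half (a b : R) : a / 2 * (b / 2) = a * b / 4 := by
  rw [Commute.div_mul_div_comm (Commute.ofNat_left 2 2) (Commute.ofNat_left 2 b).inv_left₀]
  norm_num

theorem two_mul_div_four [NeZero (2 : R)] (a : R) : 2 * a / 4 = a / 2 := by
  rw [(Commute.ofNat_left 2 a).eq, show (4 : R) = 2 * 2 by norm_num, div_mul_eq_div_div_swap,
    mul_div_cancel_right₀ a two_ne_zero]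

variable [NeZero (2 : R)]

theorem add_mul_mul_div_two_eq_of_mul_self_eq_neg_one_left {f : R} (hf : f * f = -1) (x g : R) :
    (x + f * x * g) / 2 =
      (x - f * x * f) / 2 * ((1 + f * g) / 2) + (x + f * x * f) / 2 * ((1 - f * g) / 2) := by
  rw [half_mul_half, half_mul_half, ← add_div, sub_mul_add_add_mul_of_mul_self_eq_neg_one hf,
    two_mul_div_four]

theorem add_mul_mul_div_two_eq_of_mul_self_eq_neg_one_right {g : R} (hg : g * g = -1) (x f : R) :
    (x + f * x * g) / 2 =
      (1 + f * g) / 2 * ((x - g * x * g) / 2) + (1 - f * g) / 2 * ((x + g * x * g) / 2) := by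
  rw [half_mul_half, half_mul_half, ← add_div, mul_sub_add_mul_add_of_mul_self_eq_neg_one hg,
    two_mul_div_four]

end DivisionRing

instance : CharZero ℍ[ℝ] := charZero_of_injective_algebraMap (algebraMap ℝ ℍ[ℝ]).injective

theorem quaternion_pm_split_as_combination (f g : ℍ[ℝ]) (hf : f ^ 2 = -1) (hg : g ^ 2 = -1)
    (x : ℍ[ℝ]) :
    (x + f * x * g) / 2 =
      ((x - f * x * f) / 2) * ((1 + f * g) / 2) + ((x + f * x * f) / 2) * ((1 - f * g) / 2) ∧
    (x - f * x * g) / 2 =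
      ((x - f * x * f) / 2) * ((1 - f * g) / 2) + ((x + f * x * f) / 2) * ((1 + f * g) / 2) ∧
    (x + f * x * g) / 2 =
      ((1 + f * g) / 2) * ((x - g * x * g) / 2) + ((1 - f * g) / 2) * ((x + g * x * g) / 2) ∧
    (x - f * x * g) / 2 =
      ((1 - f * g) / 2) * ((x - g * x * g) / 2) + ((1 + f * g) / 2) * ((x + g * x * g) / 2) := by
  rw [sq] at hf hg
  refine ⟨add_mul_mul_div_two_eq_of_mul_self_eq_neg_one_left hf x g, ?_,
    add_mul_mul_div_two_eq_of_mul_self_eq_neg_one_right hg x f, ?_⟩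
  -- the `-` identities are the `+` ones for `-g`, resp. `-f`
  · simpa [← sub_eq_add_neg] using add_mul_mul_div_two_eq_of_mul_self_eq_neg_one_left hf x (-g)
  · simpa [← sub_eq_add_neg] using add_mul_mul_div_two_eq_of_mul_self_eq_neg_one_right hg x (-f)
end

section
/- Let f, g be pure (real part zero) quaternions with f² = g² = −1, so that the quaternion conjugates satisfy f̄ = −f and ḡ = −g. For any quaternions x, y with splits x± = ½(x ± f x g) and y± = ½(y ± f y g), the real (scalar) parts of the mixed products vanish: Re(x₊ · conj(y₋)) = 0 and Re(x₋ · conj(y₊)) = 0, where conj denotes quaternion conjugation. -/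
/-! The map `T x = f * x * g` is an involution (`f² = g² = -1`) and is self-adjoint for the
inner product `⟪x, y⟫ = Re (x * ȳ)` (conjugation turns `f`, `g` into `-f`, `-g`, the signs cancel,
and `Re` is invariant under cyclic permutation). The splits `x± = (x ± T x) / 2` are the
components of `x` in the `±1`-eigenspaces of `T`, and eigenspaces of a self-adjoint involution
for distinct eigenvalues are orthogonal. -/

open Quaternion
open scoped RealInnerProductSpace

theorem LinearMap.IsSymmetric.inner_add_self_sub_self_eq_zero {𝕜 E : Type*} [RCLike 𝕜]
    [NormedAddCommGroup E] [InnerProductSpace 𝕜 E] {T : E →ₗ[𝕜] E} (hT : T.IsSymmetric)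
    (hTT : ∀ x, T (T x) = x) (x y : E) : inner 𝕜 (x + T x) (y - T y) = 0 := by
  have hTxTy : inner 𝕜 (T x) (T y) = inner 𝕜 x y := by rw [hT, hTT]
  simp only [inner_add_left, inner_sub_right, hTxTy, hT x y]
  ring

theorem Quaternion.re_mul_comm {R : Type*} [CommRing R] (a b : ℍ[R]) :
    (a * b).re = (b * a).re := by
  simp only [re_mul]
  ring

namespace Quaternion

theorem div_two_eq_smul (a : ℍ) : a / 2 = (2⁻¹ : ℝ) • a := by
  rw [div_eq_mul_inv, show (2 : ℍ) = ((2 : ℝ) : ℍ) from rfl, ← coe_inv, mul_coe_eq_smul]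

theorem re_div_two_mul_star_div_two (a b : ℍ) : (a / 2 * star (b / 2)).re = ⟪a, b⟫ / 4 := by
  rw [div_two_eq_smul, div_two_eq_smul, ← inner_def, real_inner_smul_left,
    real_inner_smul_right]
  ring

theorem isSymmetric_mulLeftRight {f g : ℍ} (hf : star f = -f) (hg : star g = -g) :
    (LinearMap.mulLeftRight ℝ (f, g)).IsSymmetric := fun x y => by
  simp only [LinearMap.mulLeftRight_apply, inner_def, star_mul, hf, hg, neg_mul, mul_neg,
    neg_neg]
  calc (f * x * g * star y).re = (f * (x * g * star y)).re := by simp only [mul_assoc]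
    _ = (x * g * star y * f).re := re_mul_comm _ _
    _ = (x * (g * (star y * f))).re := by simp only [mul_assoc]

theorem mulLeftRight_mulLeftRight_of_sq_eq_neg_one {f g : ℍ} (hf : f ^ 2 = -1)
    (hg : g ^ 2 = -1) (x : ℍ) :
    LinearMap.mulLeftRight ℝ (f, g) (LinearMap.mulLeftRight ℝ (f, g) x) = x := by
  simp only [LinearMap.mulLeftRight_apply]
  calc f * (f * x * g) * g = f ^ 2 * x * g ^ 2 := by simp only [sq, mul_assoc]
    _ = x := by simp [hf, hg]

end Quaternion

theorem quaternion_pm_split_orthogonality (f g : ℍ[ℝ]) (hf : f ^ 2 = -1) (hg : g ^ 2 = -1)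
    (hfre : f.re = 0) (hgre : g.re = 0) (x y : ℍ[ℝ]) :
    (((x + f * x * g) / 2) * star ((y - f * y * g) / 2)).re = 0 ∧
    (((x - f * x * g) / 2) * star ((y + f * y * g) / 2)).re = 0 := by
  have hT := isSymmetric_mulLeftRight (star_eq_neg.2 hfre) (star_eq_neg.2 hgre)
  have hTT := mulLeftRight_mulLeftRight_of_sq_eq_neg_one hf hg
  simp only [re_div_two_mul_star_div_two, ← LinearMap.mulLeftRight_apply (R := ℝ)]
  constructor
  · rw [hT.inner_add_self_sub_self_eq_zero hTT, zero_div]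
  · rw [real_inner_comm, hT.inner_add_self_sub_self_eq_zero hTT, zero_div]
end

section
/- Let f, g be quaternions with f² = g² = −1 and let α, β ∈ ℝ. For any quaternion x with split parts x± = ½(x ± f x g), the general identity exp(αf) · x± · exp(βg) = x± · exp((β ∓ α)g) = exp((α ∓ β)f) · x± holds, where exp is the quaternion exponential. -/
/-!
If `f² = g² = -1`, then `f x₊ = x₊ (-g)` and `f x₋ = x₋ g`: the split parts intertwine `f` with
`∓g`. Intertwining passes to exponentials, so `exp (α f)` can be moved through `x±` as
`exp (∓α g)` (and `exp (β g)` as `exp (∓β f)`), after which the two exponentials of commuting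
elements combine into one.
-/

open Quaternion

section Intertwining

variable {R : Type*} [Ring R] {f g : R}

theorem semiconjBy_add_mul_mul_neg (hf : f ^ 2 = -1) (hg : g ^ 2 = -1) (x : R) :
    SemiconjBy (x + f * x * g) (-g) f := by
  rw [sq] at hf hg
  calc (x + f * x * g) * -g = -(x * g) - f * x * (g * g) := by noncomm_ring
    _ = f * x + f * f * (x * g) := by rw [hf, hg]; noncomm_ring
    _ = f * (x + f * x * g) := by noncomm_ring

theorem semiconjBy_sub_mul_mul (hf : f ^ 2 = -1) (hg : g ^ 2 = -1) (x : R) :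
    SemiconjBy (x - f * x * g) g f := by
  rw [sq] at hf hg
  calc (x - f * x * g) * g = x * g - f * x * (g * g) := by noncomm_ring
    _ = f * x - f * f * (x * g) := by rw [hf, hg]; noncomm_ring
    _ = f * (x - f * x * g) := by noncomm_ring

end Intertwining

theorem SemiconjBy.div_two {D : Type*} [DivisionRing D] {x a b : D} (h : SemiconjBy x a b) :
    SemiconjBy (x / 2) a b := by
  rw [div_eq_mul_inv]
  exact h.mul_left (Commute.ofNat_left 2 a).inv_left₀

open NormedSpace in
theorem SemiconjBy.exp_smul_mul_mul_exp_smul {𝔸 : Type*} [NormedRing 𝔸] [NormedAlgebra ℝ 𝔸]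
    [CompleteSpace 𝔸] {p a b : 𝔸} (h : SemiconjBy p a b) (s t : ℝ) :
    exp (s • b) * p * exp (t • a) = p * exp ((s + t) • a) ∧
      exp (s • b) * p * exp (t • a) = exp ((s + t) • b) * p := by
  let : NormedAlgebra ℚ 𝔸 := .restrictScalars ℚ ℝ 𝔸
  have move (r : ℝ) : p * exp (r • a) = exp (r • b) * p := (h.smul_right r).exp_right
  have exp_add (c : 𝔸) : exp ((s + t) • c) = exp (s • c) * exp (t • c) := by
    rw [add_smul, exp_add_of_commute (((Commute.refl c).smul_left s).smul_right t)]
  constructor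
  · rw [exp_add, ← move, mul_assoc]
  · rw [exp_add, mul_assoc, move, mul_assoc]

theorem quaternion_pm_split_exp_identity (f g : ℍ[ℝ]) (hf : f ^ 2 = -1) (hg : g ^ 2 = -1)
    (α β : ℝ) (x : ℍ[ℝ]) :
    (NormedSpace.exp (α • f) * ((x + f * x * g) / 2) * NormedSpace.exp (β • g) =
        ((x + f * x * g) / 2) * NormedSpace.exp ((β - α) • g) ∧
      NormedSpace.exp (α • f) * ((x + f * x * g) / 2) * NormedSpace.exp (β • g) =
        NormedSpace.exp ((α - β) • f) * ((x + f * x * g) / 2)) ∧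
    (NormedSpace.exp (α • f) * ((x - f * x * g) / 2) * NormedSpace.exp (β • g) =
        ((x - f * x * g) / 2) * NormedSpace.exp ((β + α) • g) ∧
      NormedSpace.exp (α • f) * ((x - f * x * g) / 2) * NormedSpace.exp (β • g) =
        NormedSpace.exp ((α + β) • f) * ((x - f * x * g) / 2)) := by
  have plus := (semiconjBy_add_mul_mul_neg hf hg x).div_two.exp_smul_mul_mul_exp_smul α (-β)
  have minus := (semiconjBy_sub_mul_mul hf hg x).div_two.exp_smul_mul_mul_exp_smul α β
  have hβ : (-β) • -g = β • g := neg_smul_neg β g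
  have hαβ : (α + -β) • -g = (β - α) • g := by
    rw [smul_neg, ← neg_smul]
    congr 1
    ring
  rw [hβ, hαβ, ← sub_eq_add_neg] at plus
  rw [add_comm β α]
  exact ⟨plus, minus⟩
end

section
/- Let f, g be pure (real part zero) quaternions with f² = g² = −1. For every quaternion x with split parts x± = ½(x ± f x g), the Pythagorean modulus identity |x|² = |x₊|² + |x₋|² holds, where |·| is the quaternion norm. -/
/-! The map `x ↦ f x g` is an isometry of `ℍ`, because `f² = g² = -1` forces `‖f‖ = ‖g‖ = 1`.
For any isometric image `y` of `x`, the parallelogram law gives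
`‖x + y‖² + ‖x - y‖² = 2 (‖x‖² + ‖y‖²) = 4 ‖x‖²`, which is the identity after dividing by `4`. -/

open Quaternion

theorem norm_sq_eq_half_norm_add_sq_add_half_norm_sub_sq {E : Type*} [SeminormedAddCommGroup E]
    [InnerProductSpace ℝ E] {x y : E} (h : ‖y‖ = ‖x‖) :
    ‖x‖ ^ 2 = (‖x + y‖ / 2) ^ 2 + (‖x - y‖ / 2) ^ 2 := by
  have := parallelogram_law_with_norm ℝ x y
  rw [h] at this
  linarith

theorem norm_eq_one_of_sq_eq_neg_one {α : Type*} [SeminormedRing α] [NormOneClass α]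
    [NormMulClass α] {a : α} (h : a ^ 2 = -1) : ‖a‖ = 1 := by
  have hsq : ‖a‖ ^ 2 = 1 := by rw [← norm_pow, h, norm_neg, norm_one]
  nlinarith [norm_nonneg a]

theorem norm_ofNat_of_normedAlgebra {A : Type*} [SeminormedRing A] [NormedAlgebra ℝ A]
    [NormOneClass A] (n : ℕ) [n.AtLeastTwo] : ‖(OfNat.ofNat n : A)‖ = OfNat.ofNat n := by
  rw [← map_ofNat (algebraMap ℝ A) n, norm_algebraMap', Real.norm_ofNat]

theorem quaternion_pm_split_pythagorean_general (f g : ℍ[ℝ]) (hf : f ^ 2 = -1) (hg : g ^ 2 = -1)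
    (x : ℍ[ℝ]) :
    ‖x‖ ^ 2 = ‖(x + f * x * g) / 2‖ ^ 2 + ‖(x - f * x * g) / 2‖ ^ 2 := by
  have hiso : ‖f * x * g‖ = ‖x‖ := by
    rw [norm_mul, norm_mul, norm_eq_one_of_sq_eq_neg_one hf, norm_eq_one_of_sq_eq_neg_one hg,
      one_mul, mul_one]
  rw [norm_div, norm_div, norm_ofNat_of_normedAlgebra]
  exact norm_sq_eq_half_norm_add_sq_add_half_norm_sub_sq hiso

theorem quaternion_pm_split_pythagorean (f g : ℍ[ℝ]) (hf : f ^ 2 = -1) (hg : g ^ 2 = -1)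
    (hfre : f.re = 0) (hgre : g.re = 0) (x : ℍ[ℝ]) :
    ‖x‖ ^ 2 = ‖(x + f * x * g) / 2‖ ^ 2 + ‖(x - f * x * g) / 2‖ ^ 2 :=
  quaternion_pm_split_pythagorean_general f g hf hg x
end

section
/- Let f, g be quaternions with f² = g² = −1, and let h : (0,∞) × (0,2π) → ℍ be such that (r,θ) ↦ h(r,θ) is integrable with respect to the measure dθ dr/r. Then for all v ∈ ℝ and k ∈ ℤ, the ± split and the Clifford Fourier–Mellin transform commute: M{h±}(v,k) = (M{h}(v,k))±, where h±(r,θ) = ½(h(r,θ) ± f h(r,θ) g) and (M{h}(v,k))± = ½(M{h}(v,k) ± f M{h}(v,k) g). -/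
open Quaternion MeasureTheory Real

/-- The measure `dθ dr/r` on `(0,∞) × (0,2π) ⊆ ℝ × ℝ`, first coordinate `r`,
second coordinate `θ`. -/
noncomputable def mellinMeasure : Measure (ℝ × ℝ) :=
  ((volume.restrict (Set.Ioi (0 : ℝ))).withDensity fun r => ENNReal.ofReal r⁻¹).prod
    (volume.restrict (Set.Ioo (0 : ℝ) (2 * π)))

/-- The Clifford Fourier–Mellin transform of a quaternion-valued signal. -/
noncomputable def CFMT (f g : ℍ[ℝ]) (h : ℝ × ℝ → ℍ[ℝ]) (v : ℝ) (k : ℤ) : ℍ[ℝ] :=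
  (2 * π)⁻¹ •
    ∫ p, NormedSpace.exp ((-(v * Real.log p.1)) • f) * h p *
      NormedSpace.exp ((-((k : ℝ) * p.2)) • g) ∂mellinMeasure

/-!
The split `x ↦ ½(x ± f x g)` is a continuous ℝ-linear map, and it commutes with left
multiplication by `exp (s • f)` and right multiplication by `exp (t • g)`, because these
exponentials commute with `f` and `g` respectively. Hence it can be pulled out of the integrand
and then out of the integral. The latter needs the integrand to be integrable: `f² = g² = -1`
forces `f` and `g` to be pure imaginary, so both kernels are unit quaternions.
-/

open ContinuousLinearMap

theorem Quaternion.re_eq_zero_of_sq_eq_neg_one {f : ℍ[ℝ]} (hf : f ^ 2 = -1) : f.re = 0 := by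
  have hnormSq : normSq f = 1 := by
    rw [normSq_eq_norm_mul_self, ← norm_mul, ← sq, hf, norm_neg, norm_one]
  rw [← sq_eq_neg_normSq, hnormSq, hf]
  norm_num

theorem Quaternion.norm_exp_smul_of_sq_eq_neg_one {f : ℍ[ℝ]} (hf : f ^ 2 = -1) (t : ℝ) :
    ‖NormedSpace.exp (t • f)‖ = 1 := by
  simp [norm_exp, re_eq_zero_of_sq_eq_neg_one hf]

theorem Quaternion.div_two_eq_inv_two_smul (x : ℍ[ℝ]) : x / 2 = (2 : ℝ)⁻¹ • x := by
  rw [← mul_coe_eq_smul, coe_inv, div_eq_mul_inv]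
  rfl

theorem continuous_exp_smul_const {𝔸 : Type*} [NormedRing 𝔸] [NormedAlgebra ℝ 𝔸]
    [CompleteSpace 𝔸] (x : 𝔸) : Continuous fun t : ℝ => NormedSpace.exp (t • x) :=
  continuous_iff_continuousAt.2 fun t => (hasDerivAt_exp_smul_const x t).continuousAt

theorem Commute.sandwich_comm {R : Type*} [Semigroup R] {a b f g : R} (ha : Commute a f)
    (hb : Commute b g) (x : R) : a * (f * x * g) * b = f * (a * x * b) * g := by
  simp only [← mul_assoc, ha.eq]
  simp only [mul_assoc, hb.eq]

section Integrand

variable {f g : ℍ[ℝ]} {h : ℝ × ℝ → ℍ[ℝ]} {v : ℝ} {k : ℤ}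

variable (f g h v k) in
noncomputable def cfmtIntegrand (p : ℝ × ℝ) : ℍ[ℝ] :=
  NormedSpace.exp ((-(v * Real.log p.1)) • f) * h p * NormedSpace.exp ((-((k : ℝ) * p.2)) • g)

variable (f g h v k) in
theorem CFMT_eq_integral_cfmtIntegrand :
    CFMT f g h v k = (2 * π)⁻¹ • ∫ p, cfmtIntegrand f g h v k p ∂mellinMeasure :=
  rfl

theorem integrable_cfmtIntegrand {μ : Measure (ℝ × ℝ)} (hf : f ^ 2 = -1) (hg : g ^ 2 = -1)
    (hInt : Integrable h μ) : Integrable (cfmtIntegrand f g h v k) μ := by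
  have hA : AEStronglyMeasurable
      (fun p : ℝ × ℝ => NormedSpace.exp ((-(v * Real.log p.1)) • f)) μ :=
    (continuous_exp_smul_const f).comp_aestronglyMeasurable
      ((Real.measurable_log.comp measurable_fst).const_mul v).neg.aestronglyMeasurable
  have hB : AEStronglyMeasurable
      (fun p : ℝ × ℝ => NormedSpace.exp ((-((k : ℝ) * p.2)) • g)) μ :=
    (continuous_exp_smul_const g).comp_aestronglyMeasurable
      (measurable_snd.const_mul (k : ℝ)).neg.aestronglyMeasurable
  refine (hInt.bdd_mul hA (c := 1) (ae_of_all _ fun _ => ?_)).mul_bdd hB (c := 1)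
    (ae_of_all _ fun _ => ?_)
  · exact (Quaternion.norm_exp_smul_of_sq_eq_neg_one hf _).le
  · exact (Quaternion.norm_exp_smul_of_sq_eq_neg_one hg _).le

theorem CFMT_comp_comm (hf : f ^ 2 = -1) (hg : g ^ 2 = -1) (hInt : Integrable h mellinMeasure)
    (L : ℍ[ℝ] →L[ℝ] ℍ[ℝ])
    (hL : ∀ a b x, Commute a f → Commute b g → L (a * x * b) = a * L x * b) :
    CFMT f g (fun p => L (h p)) v k = L (CFMT f g h v k) := by
  have hpointwise : cfmtIntegrand f g (fun p => L (h p)) v k =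
      fun p => L (cfmtIntegrand f g h v k p) :=
    funext fun p => (hL _ _ _ ((Commute.refl f).smul_right _).exp_right.symm
      ((Commute.refl g).smul_right _).exp_right.symm).symm
  rw [CFMT_eq_integral_cfmtIntegrand, CFMT_eq_integral_cfmtIntegrand, hpointwise,
    L.integral_comp_comm (integrable_cfmtIntegrand hf hg hInt), L.map_smul]

end Integrand

/-- `pmSplit f g 1 x = x₊` and `pmSplit f g (-1) x = x₋`. -/
noncomputable def pmSplit (f g : ℍ[ℝ]) (ε : ℝ) : ℍ[ℝ] →L[ℝ] ℍ[ℝ] :=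
  (2⁻¹ : ℝ) • (1 + ε • mulLeftRight ℝ ℍ[ℝ] f g)

theorem pmSplit_apply (f g : ℍ[ℝ]) (ε : ℝ) (x : ℍ[ℝ]) :
    pmSplit f g ε x = (2⁻¹ : ℝ) • (x + ε • (f * x * g)) :=
  rfl

theorem pmSplit_sandwich {f g a b : ℍ[ℝ]} (ε : ℝ) (ha : Commute a f) (hb : Commute b g)
    (x : ℍ[ℝ]) : pmSplit f g ε (a * x * b) = a * pmSplit f g ε x * b := by
  simp only [pmSplit_apply, ha.sandwich_comm hb, mul_smul_comm, smul_mul_assoc, mul_add, add_mul]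

theorem cfmt_commutes_with_pm_split (f g : ℍ[ℝ]) (hf : f ^ 2 = -1) (hg : g ^ 2 = -1)
    (h : ℝ × ℝ → ℍ[ℝ]) (hInt : Integrable h mellinMeasure) (v : ℝ) (k : ℤ) :
    CFMT f g (fun p => (h p + f * h p * g) / 2) v k =
      (CFMT f g h v k + f * CFMT f g h v k * g) / 2 ∧
    CFMT f g (fun p => (h p - f * h p * g) / 2) v k =
      (CFMT f g h v k - f * CFMT f g h v k * g) / 2 := by
  have hsplit (ε : ℝ) := CFMT_comp_comm (v := v) (k := k) hf hg hInt (pmSplit f g ε)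
    fun _ _ x ha hb => pmSplit_sandwich ε ha hb x
  simp only [pmSplit_apply, ← Quaternion.div_two_eq_inv_two_smul] at hsplit
  constructor
  · simpa using hsplit 1
  · simpa [sub_eq_add_neg] using hsplit (-1)
end

section
/- Let f, g be quaternions with f² = g² = −1, and let h : (0,∞) × (0,2π) → ℍ be integrable with respect to dθ dr/r, with split parts h±(r,θ) = ½(h(r,θ) ± f h(r,θ) g). Then the Clifford Fourier–Mellin transforms of h± have the quasi-complex forms M{h±}(v,k) = (1/2π) ∫₀^∞ ∫₀^{2π} h±(r,θ) · exp(±g v ln r) · exp(−g k θ) dθ dr/r = (1/2π) ∫₀^∞ ∫₀^{2π} exp(−f v ln r) · exp(±f k θ) · h±(r,θ) dθ dr/r, i.e. the kernel factors can be placed entirely on one side. -/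
open Quaternion MeasureTheory Real

/-! The split parts `x± = (x ± f x g) / 2` intertwine left multiplication by `f` with right
multiplication by `∓g`, hence `exp (t f)` with `exp (∓t g)`; so in the CFMT kernel the
factor on one side can be moved to the other. -/

section SplitParts

variable {D : Type*} [DivisionRing D] {f g : D}

theorem semiconjBy_half_add_mul_mul (hf : f ^ 2 = -1) (hg : g ^ 2 = -1) (x : D) :
    SemiconjBy ((x + f * x * g) / 2) (-g) f := by
  have hsplit : SemiconjBy (x + f * x * g) (-g) f := by
    rw [SemiconjBy, sq] at *
    calc (x + f * x * g) * -g = -(x * g) - f * x * (g * g) := by noncomm_ring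
      _ = f * x + f * f * x * g := by rw [hf, hg]; noncomm_ring
      _ = f * (x + f * x * g) := by noncomm_ring
  rw [div_eq_mul_inv]
  exact hsplit.mul_left (Commute.ofNat_left 2 (-g)).inv_left₀

theorem semiconjBy_half_sub_mul_mul (hf : f ^ 2 = -1) (hg : g ^ 2 = -1) (x : D) :
    SemiconjBy ((x - f * x * g) / 2) g f := by
  simpa only [mul_neg, ← sub_eq_add_neg, neg_neg] using
    semiconjBy_half_add_mul_mul hf (g := -g) (by rwa [neg_sq]) x

end SplitParts

theorem cfmt_quasi_complex_forms_general (f g : ℍ[ℝ]) (hf : f ^ 2 = -1) (hg : g ^ 2 = -1)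
    (h : ℝ × ℝ → ℍ[ℝ]) (v : ℝ) (k : ℤ) :
    (CFMT f g (fun p => (h p + f * h p * g) / 2) v k =
        (2 * π)⁻¹ •
          ∫ p, ((h p + f * h p * g) / 2) * NormedSpace.exp ((v * Real.log p.1) • g) *
            NormedSpace.exp ((-((k : ℝ) * p.2)) • g) ∂mellinMeasure ∧
      CFMT f g (fun p => (h p + f * h p * g) / 2) v k =
        (2 * π)⁻¹ •
          ∫ p, NormedSpace.exp ((-(v * Real.log p.1)) • f) *
            NormedSpace.exp (((k : ℝ) * p.2) • f) * ((h p + f * h p * g) / 2) ∂mellinMeasure) ∧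
    (CFMT f g (fun p => (h p - f * h p * g) / 2) v k =
        (2 * π)⁻¹ •
          ∫ p, ((h p - f * h p * g) / 2) * NormedSpace.exp ((-(v * Real.log p.1)) • g) *
            NormedSpace.exp ((-((k : ℝ) * p.2)) • g) ∂mellinMeasure ∧
      CFMT f g (fun p => (h p - f * h p * g) / 2) v k =
        (2 * π)⁻¹ •
          ∫ p, NormedSpace.exp ((-(v * Real.log p.1)) • f) *
            NormedSpace.exp ((-((k : ℝ) * p.2)) • f) * ((h p - f * h p * g) / 2)
            ∂mellinMeasure) := by
  -- `SemiconjBy.exp_right` is stated for Banach algebras over `ℚ`.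
  let +nondep : NormedAlgebra ℚ ℍ[ℝ] := .restrictScalars ℚ ℝ ℍ[ℝ]
  have plus (t : ℝ) (x : ℍ[ℝ]) : SemiconjBy ((x + f * x * g) / 2)
      (NormedSpace.exp (t • -g)) (NormedSpace.exp (t • f)) :=
    ((semiconjBy_half_add_mul_mul hf hg x).smul_right t).exp_right
  have minus (t : ℝ) (x : ℍ[ℝ]) : SemiconjBy ((x - f * x * g) / 2)
      (NormedSpace.exp (t • g)) (NormedSpace.exp (t • f)) :=
    ((semiconjBy_half_sub_mul_mul hf hg x).smul_right t).exp_right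
  refine ⟨⟨?_, ?_⟩, ?_, ?_⟩ <;> unfold CFMT <;> congr 2 <;> funext p <;> beta_reduce
  · rw [← (plus _ _).eq, neg_smul_neg]
  · rw [mul_assoc, mul_assoc (NormedSpace.exp _), ← (plus _ _).eq, smul_neg, ← neg_smul]
  · rw [← (minus _ _).eq]
  · rw [mul_assoc, mul_assoc (NormedSpace.exp _), ← (minus _ _).eq]

theorem cfmt_quasi_complex_forms (f g : ℍ[ℝ]) (hf : f ^ 2 = -1) (hg : g ^ 2 = -1)
    (h : ℝ × ℝ → ℍ[ℝ]) (hInt : Integrable h mellinMeasure) (v : ℝ) (k : ℤ) :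
    (CFMT f g (fun p => (h p + f * h p * g) / 2) v k =
        (2 * π)⁻¹ •
          ∫ p, ((h p + f * h p * g) / 2) * NormedSpace.exp ((v * Real.log p.1) • g) *
            NormedSpace.exp ((-((k : ℝ) * p.2)) • g) ∂mellinMeasure ∧
      CFMT f g (fun p => (h p + f * h p * g) / 2) v k =
        (2 * π)⁻¹ •
          ∫ p, NormedSpace.exp ((-(v * Real.log p.1)) • f) *
            NormedSpace.exp (((k : ℝ) * p.2) • f) * ((h p + f * h p * g) / 2) ∂mellinMeasure) ∧
    (CFMT f g (fun p => (h p - f * h p * g) / 2) v k =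
        (2 * π)⁻¹ •
          ∫ p, ((h p - f * h p * g) / 2) * NormedSpace.exp ((-(v * Real.log p.1)) • g) *
            NormedSpace.exp ((-((k : ℝ) * p.2)) • g) ∂mellinMeasure ∧
      CFMT f g (fun p => (h p - f * h p * g) / 2) v k =
        (2 * π)⁻¹ •
          ∫ p, NormedSpace.exp ((-(v * Real.log p.1)) • f) *
            NormedSpace.exp ((-((k : ℝ) * p.2)) • f) * ((h p - f * h p * g) / 2)
            ∂mellinMeasure) :=
  cfmt_quasi_complex_forms_general f g hf hg h v k
end

section
/- Let f, g be quaternions with f² = g² = −1, let h : (0,∞) × ℝ → ℍ be 2π-periodic in its second argument and integrable over (0,∞) × (0,2π) with respect to dθ dr/r, and set m(r,θ) = h(r, −θ) (reversal of the sense of rotation). Then M{m}(v,k) = M{h}(v,−k) for all v ∈ ℝ and k ∈ ℤ. -/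
open Quaternion MeasureTheory Real

/-!
The substitution `θ ↦ 2π - θ` preserves `dθ dr/r` on `(0, ∞) × (0, 2π)`. After it, the signal
`h (r, -(2π - θ)) = h (r, θ - 2π)` equals `h (r, θ)` by periodicity, and the angular kernel
`exp (-k (2π - θ) g)` equals `exp (k θ g)`, because `g² = -1` makes `t ↦ exp (t g)` the image of
`t ↦ exp (t i)` under an algebra map `ℂ → ℍ`, hence `2π`-periodic.
-/

section ImaginaryUnit

variable {A : Type*} [NormedRing A] [NormedAlgebra ℝ A] [Algebra ℚ A] {g : A}

-- `Complex.liftAux g hg` is the `ℝ`-algebra map `ℂ → A` sending `I` to `g`.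
theorem NormedSpace.exp_real_smul_eq_liftAux (hg : g * g = -1) (t : ℝ) :
    NormedSpace.exp (t • g) = Complex.liftAux g hg (Complex.exp (t * Complex.I)) := by
  have hcont : Continuous (Complex.liftAux g hg) :=
    (Complex.liftAux g hg).toLinearMap.continuous_of_finiteDimensional
  have hsmul : t • g = Complex.liftAux g hg (t • Complex.I) := by
    rw [map_smul, Complex.liftAux_apply_I]
  rw [hsmul, ← NormedSpace.map_exp _ hcont, ← Complex.exp_eq_exp_ℂ, Complex.real_smul]

theorem NormedSpace.periodic_exp_real_smul (hg : g * g = -1) :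
    Function.Periodic (fun t : ℝ => NormedSpace.exp (t • g)) (2 * π) := fun t => by
  simp only [NormedSpace.exp_real_smul_eq_liftAux hg]
  push_cast
  exact congrArg _ (Complex.exp_mul_I_periodic t)

end ImaginaryUnit

theorem measurePreserving_sub_left_restrict_Ioo (a b : ℝ) :
    MeasurePreserving (a + b - ·) (volume.restrict (Set.Ioo a b))
      (volume.restrict (Set.Ioo a b)) := by
  have hpre : (a + b - ·) ⁻¹' Set.Ioo a b = Set.Ioo a b := by
    ext x
    simp only [Set.mem_preimage, Set.mem_Ioo]
    constructor <;> rintro ⟨h₁, h₂⟩ <;> constructor <;> linarith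
  simpa only [hpre] using (Measure.measurePreserving_sub_left volume (a + b)).restrict_preimage_emb
    (MeasurableEquiv.subLeft (a + b)).measurableEmbedding (Set.Ioo a b)

-- `θ ↦ 2π - θ` rather than `θ ↦ -θ`, so that the angular domain `(0, 2π)` is mapped onto itself.
noncomputable def rotationReversal : (ℝ × ℝ) ≃ᵐ (ℝ × ℝ) :=
  (MeasurableEquiv.refl ℝ).prodCongr (MeasurableEquiv.subLeft (2 * π))

theorem rotationReversal_apply (p : ℝ × ℝ) : rotationReversal p = (p.1, 2 * π - p.2) := rfl

theorem measurePreserving_rotationReversal :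
    MeasurePreserving rotationReversal mellinMeasure mellinMeasure := by
  have hθ := measurePreserving_sub_left_restrict_Ioo 0 (2 * π)
  rw [zero_add] at hθ
  exact (MeasurePreserving.id _).prod hθ

theorem cfmt_rotation_reversal_general (f g : ℍ[ℝ]) (hg : g ^ 2 = -1)
    (h : ℝ × ℝ → ℍ[ℝ]) (hper : ∀ r θ : ℝ, h (r, θ + 2 * π) = h (r, θ))
    (v : ℝ) (k : ℤ) :
    CFMT f g (fun p => h (p.1, -p.2)) v k = CFMT f g h v (-k) := by
  have hexp := NormedSpace.periodic_exp_real_smul (pow_two g ▸ hg)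
  unfold CFMT
  rw [← measurePreserving_rotationReversal.integral_comp']
  refine congrArg _ (integral_congr_ae (ae_of_all _ fun ⟨r, θ⟩ => ?_))
  have hangle : h (r, -(2 * π - θ)) = h (r, θ) := by
    simpa using (hper r (θ - 2 * π)).symm
  have hphase : -((k : ℝ) * (2 * π - θ)) = -(((-k : ℤ) : ℝ) * θ) - k * (2 * π) := by
    push_cast
    ring
  simp only [rotationReversal_apply, hangle, hphase, hexp.sub_int_mul_eq]

theorem cfmt_rotation_reversal (f g : ℍ[ℝ]) (hf : f ^ 2 = -1) (hg : g ^ 2 = -1)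
    (h : ℝ × ℝ → ℍ[ℝ]) (hper : ∀ r θ : ℝ, h (r, θ + 2 * π) = h (r, θ))
    (hInt : Integrable h mellinMeasure) (v : ℝ) (k : ℤ) :
    CFMT f g (fun p => h (p.1, -p.2)) v k = CFMT f g h v (-k) :=
  cfmt_rotation_reversal_general f g hg h hper v k
end

section
/- Let f, g be quaternions with f² = g² = −1, let h : (0,∞) × (0,2π) → ℍ be integrable with respect to dθ dr/r, let v₀ ∈ ℝ and k₀ ∈ ℤ, and set m(r,θ) = exp(f v₀ ln r) · h(r,θ) · exp(g k₀ θ) (radial and rotary modulation). Then M{m}(v,k) = M{h}(v − v₀, k − k₀) for all v ∈ ℝ and k ∈ ℤ. -/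
open Quaternion MeasureTheory Real

section RealBanachAlgebra

variable {𝔸 : Type*} [NormedRing 𝔸] [NormedAlgebra ℝ 𝔸] [CompleteSpace 𝔸]

theorem NormedSpace.exp_smul_mul_exp_smul (x : 𝔸) (a b : ℝ) :
    exp (a • x) * exp (b • x) = exp ((a + b) • x) := by
  let +nondep : NormedAlgebra ℚ 𝔸 := .restrictScalars ℚ ℝ 𝔸
  rw [add_smul, exp_add_of_commute ((Commute.refl x).smul_left a |>.smul_right b)]

theorem NormedSpace.exp_smul_mul_modulate_mul_exp_smul (f g y : 𝔸) (a a' b b' : ℝ) :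
    exp (a • f) * (exp (a' • f) * y * exp (b' • g)) * exp (b • g) =
      exp ((a + a') • f) * y * exp ((b' + b) • g) := by
  simp only [← exp_smul_mul_exp_smul, mul_assoc]

end RealBanachAlgebra

theorem cfmt_modulation_general (f g : ℍ[ℝ])
    (h : ℝ × ℝ → ℍ[ℝ])
    (v₀ : ℝ) (k₀ : ℤ) (v : ℝ) (k : ℤ) :
    CFMT f g
        (fun p => NormedSpace.exp ((v₀ * Real.log p.1) • f) * h p *
          NormedSpace.exp (((k₀ : ℝ) * p.2) • g)) v k =
      CFMT f g h (v - v₀) (k - k₀) := by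
  unfold CFMT
  congr 2
  funext p
  rw [NormedSpace.exp_smul_mul_modulate_mul_exp_smul]
  push_cast
  ring_nf

theorem cfmt_modulation (f g : ℍ[ℝ]) (hf : f ^ 2 = -1) (hg : g ^ 2 = -1)
    (h : ℝ × ℝ → ℍ[ℝ]) (hInt : Integrable h mellinMeasure)
    (v₀ : ℝ) (k₀ : ℤ) (v : ℝ) (k : ℤ) :
    CFMT f g
        (fun p => NormedSpace.exp ((v₀ * Real.log p.1) • f) * h p *
          NormedSpace.exp (((k₀ : ℝ) * p.2) • g)) v k =
      CFMT f g h (v - v₀) (k - k₀) :=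
  cfmt_modulation_general f g h v₀ k₀ v k
end
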